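/- The map f sending a regular closed subset B of the five-point space T to B∖{a} is a bijection from the regular closed subsets of T onto the regular closed subsets of the subspace T' = T∖{a} which satisfies f(∅)=∅, f(T)=T', f(B∪D)=f(B)∪f(D), f(closure(T∖B)) = closure_{τ'}(T'∖f(B)), and B∩D ≠ ∅ if and only if f(B)∩f(D) ≠ ∅, for all regular closed B, D of T. -/

import Mathlib

/-- The five-point space `T = {x, y, z, a, b}` (five pairwise distinct points). -/
inductive Pt : Type
  | x | y | z | a | b
deriving DecidableEq

open Pt

/-- The topology on `T` generated by the subbasis `{x,z}`, `{y,z}`, `{x,a,y}`. -/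
instance : TopologicalSpace Pt :=
  TopologicalSpace.generateFrom ({{x, z}, {y, z}, {x, a, y}} : Set (Set Pt))

/-- The regular closed subsets of T. -/
def RCT : Set (Set Pt) := {B : Set Pt | B = closure (interior B)}

/-- The regular closed subsets of the subspace T' = T∖{a}. -/
def RCT' : Set (Set {t : Pt // t ≠ a}) := {A | A = closure (interior A)}

/-- The map sending a regular closed B ⊆ T to B∖{a} ⊆ T'. -/
def restrict (B : Set Pt) : Set {t : Pt // t ≠ a} := Subtype.val ⁻¹' B

/- ---------- auxiliary development ---------- -/

instance : Fintype Pt := ⟨⟨↑[x, y, z, a, b], by decide⟩, fun t => by cases t <;> decide⟩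

abbrev Pt' := {t : Pt // t ≠ a}

/-- Minimal open neighbourhoods, as a Boolean relation. -/
def Nb : Pt → Pt → Bool
  | a, x => true
  | a, a => true
  | a, y => true
  | b, _ => true
  | t, u => t == u

def N (t : Pt) : Set Pt := {u | Nb t u = true}

lemma mem_N_self (t : Pt) : t ∈ N t := by
  show Nb t t = true; revert t; decide

lemma N_trans {t u v : Pt} (h1 : u ∈ N t) (h2 : v ∈ N u) : v ∈ N t := by
  revert h1 h2; show Nb t u = true → Nb u v = true → Nb t v = true
  revert t u v; decide

lemma N_open (t : Pt) : IsOpen (N t) := by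
  have hxz : IsOpen ({x, z} : Set Pt) := TopologicalSpace.GenerateOpen.basic _ (by simp)
  have hyz : IsOpen ({y, z} : Set Pt) := TopologicalSpace.GenerateOpen.basic _ (by simp)
  have hxay : IsOpen ({x, a, y} : Set Pt) := TopologicalSpace.GenerateOpen.basic _ (by simp)
  cases t with
  | x =>
    have : N x = {x, z} ∩ {x, a, y} := by ext u; cases u <;> simp [N, Nb]
    rw [this]; exact hxz.inter hxay
  | y =>
    have : N y = {y, z} ∩ {x, a, y} := by ext u; cases u <;> simp [N, Nb]
    rw [this]; exact hyz.inter hxay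
  | z =>
    have : N z = {x, z} ∩ {y, z} := by ext u; cases u <;> simp [N, Nb]
    rw [this]; exact hxz.inter hyz
  | a =>
    have : N a = {x, a, y} := by ext u; cases u <;> simp [N, Nb]
    rw [this]; exact hxay
  | b =>
    have : N b = Set.univ := by ext u; cases u <;> simp [N, Nb]
    rw [this]; exact isOpen_univ

lemma isOpen_iff {U : Set Pt} : IsOpen U ↔ ∀ t ∈ U, N t ⊆ U := by
  constructor
  · intro h
    change TopologicalSpace.GenerateOpen _ U at h
    induction h with
    | basic s hs =>
      simp only [Set.mem_insert_iff, Set.mem_singleton_iff] at hs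
      rcases hs with rfl | rfl | rfl <;>
        · intro t ht u hu
          revert ht hu
          show _ → Nb t u = true → _
          revert t u; decide
    | univ => intro t _; exact fun u _ => trivial
    | inter s₁ s₂ _ _ ih1 ih2 => exact fun t ht u hu => ⟨ih1 t ht.1 hu, ih2 t ht.2 hu⟩
    | sUnion S _ ih =>
      rintro t ⟨s, hsS, hts⟩ u hu
      exact ⟨s, hsS, ih s hsS t hts hu⟩
  · intro h
    have : U = ⋃ t ∈ U, N t := by
      apply subset_antisymm
      · intro t ht; exact Set.mem_biUnion ht (mem_N_self t)
      · intro u hu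
        simp only [Set.mem_iUnion] at hu
        obtain ⟨t, ht, hu⟩ := hu
        exact h t ht hu
    rw [this]
    exact isOpen_biUnion fun t _ => N_open t

lemma interior_eq (S : Set Pt) : interior S = {t | N t ⊆ S} := by
  apply subset_antisymm
  · intro t ht u hu
    exact interior_subset (isOpen_iff.mp isOpen_interior t ht hu)
  · apply interior_maximal
    · intro t ht; exact ht (mem_N_self t)
    · rw [isOpen_iff]
      intro t ht u hu v hv
      exact ht (N_trans hu hv)

lemma closure_eq (S : Set Pt) : closure S = {t | ∃ u, u ∈ N t ∧ u ∈ S} := by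
  rw [closure_eq_compl_interior_compl, interior_eq]
  ext t
  simp [Set.not_subset]

/-- Regular-closedness as a boolean-style fixed point condition. -/
def rcB (f : Pt → Bool) : Prop :=
  ∀ t, (f t = true ↔ ∃ u, Nb t u = true ∧ ∀ v, Nb u v = true → f v = true)

lemma rc_iff (f : Pt → Bool) : {t | f t = true} ∈ RCT ↔ rcB f := by
  show _ = _ ↔ _
  rw [closure_eq, interior_eq, Set.ext_iff]
  unfold rcB
  constructor
  · intro h t
    rw [show (f t = true) = (t ∈ {t | f t = true}) from rfl, h t]
    constructor
    · rintro ⟨u, hu, h2⟩; exact ⟨u, hu, fun v hv => h2 hv⟩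
    · rintro ⟨u, hu, h2⟩; exact ⟨u, hu, fun v hv => h2 v hv⟩
  · intro h t
    rw [show (t ∈ {t | f t = true}) = (f t = true) from rfl, h t]
    constructor
    · rintro ⟨u, hu, h2⟩; exact ⟨u, hu, fun v hv => h2 v hv⟩
    · rintro ⟨u, hu, h2⟩; exact ⟨u, hu, fun v hv => h2 hv⟩

/- ---------- the subspace ---------- -/

def N' (t : Pt') : Set Pt' := {u | Nb t.val u.val = true}

lemma mem_N'_self (t : Pt') : t ∈ N' t := mem_N_self t.val

lemma N'_trans {t u v : Pt'} (h1 : u ∈ N' t) (h2 : v ∈ N' u) : v ∈ N' t := N_trans h1 h2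

lemma isOpen'_iff {U : Set Pt'} : IsOpen U ↔ ∀ t ∈ U, N' t ⊆ U := by
  rw [isOpen_induced_iff]
  constructor
  · rintro ⟨V, hV, rfl⟩ t ht u hu
    exact isOpen_iff.mp hV t.val ht hu
  · intro h
    refine ⟨⋃ t ∈ U, N t.val, isOpen_biUnion fun t _ => N_open _, ?_⟩
    ext u
    simp only [Set.mem_preimage, Set.mem_iUnion]
    constructor
    · rintro ⟨t, ht, hu⟩; exact h t ht hu
    · intro hu; exact ⟨u, hu, mem_N_self u.val⟩

lemma interior_eq' (S : Set Pt') : interior S = {t | N' t ⊆ S} := by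
  apply subset_antisymm
  · intro t ht u hu
    exact interior_subset (isOpen'_iff.mp isOpen_interior t ht hu)
  · apply interior_maximal
    · intro t ht; exact ht (mem_N'_self t)
    · rw [isOpen'_iff]
      intro t ht u hu v hv
      exact ht (N'_trans hu hv)

lemma closure_eq' (S : Set Pt') : closure S = {t | ∃ u, u ∈ N' t ∧ u ∈ S} := by
  rw [closure_eq_compl_interior_compl, interior_eq']
  ext t
  simp [Set.not_subset]

def rcB' (g : Pt' → Bool) : Prop :=
  ∀ t : Pt', (g t = true ↔
    ∃ u : Pt', Nb t.val u.val = true ∧ ∀ v : Pt', Nb u.val v.val = true → g v = true)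

lemma rc_iff' (g : Pt' → Bool) : {t | g t = true} ∈ RCT' ↔ rcB' g := by
  show _ = _ ↔ _
  rw [closure_eq', interior_eq', Set.ext_iff]
  unfold rcB'
  constructor
  · intro h t
    rw [show (g t = true) = (t ∈ {t | g t = true}) from rfl, h t]
    constructor
    · rintro ⟨u, hu, h2⟩; exact ⟨u, hu, fun v hv => h2 hv⟩
    · rintro ⟨u, hu, h2⟩; exact ⟨u, hu, fun v hv => h2 v hv⟩
  · intro h t
    rw [show (t ∈ {t | g t = true}) = (g t = true) from rfl, h t]
    constructor
    · rintro ⟨u, hu, h2⟩; exact ⟨u, hu, fun v hv => h2 v hv⟩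
    · rintro ⟨u, hu, h2⟩; exact ⟨u, hu, fun v hv => h2 hv⟩

/- ---------- boolean reduction ---------- -/

lemma exists_bool {α : Type*} (B : Set α) : ∃ f : α → Bool, B = {t | f t = true} := by
  classical
  exact ⟨fun t => decide (t ∈ B), by ext t; simp⟩

instance (f : Pt → Bool) : Decidable (rcB f) := by unfold rcB; infer_instance
instance (g : Pt' → Bool) : Decidable (rcB' g) := by unfold rcB'; infer_instance

def liftB (g : Pt' → Bool) : Pt → Bool := fun t =>
  if h : t = a then (g ⟨x, by decide⟩ || g ⟨y, by decide⟩) else g ⟨t, h⟩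

lemma L1 : ∀ f : Pt → Bool, rcB f → rcB' (fun u => f u.val) := by decide
lemma L2 : ∀ f g : Pt → Bool, rcB f → rcB g →
    (∀ t : Pt', (f t.val = true ↔ g t.val = true)) → ∀ t, (f t = true ↔ g t = true) := by decide
lemma L3 : ∀ g : Pt' → Bool, rcB' g → (rcB (liftB g) ∧ ∀ t : Pt', liftB g t.val = g t) := by decide
lemma L4 : ∀ f : Pt → Bool, rcB f → ∀ t : Pt',
    ((∃ u : Pt, Nb t.val u = true ∧ ¬ f u = true) ↔
     (∃ u : Pt', Nb t.val u.val = true ∧ ¬ f u.val = true)) := by decide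
lemma L5 : ∀ f g : Pt → Bool, rcB f → rcB g →
    ((∃ t : Pt, f t = true ∧ g t = true) ↔ (∃ t : Pt', f t.val = true ∧ g t.val = true)) := by
  decide

/- ---------- the theorem ---------- -/

/-- The map f : B ↦ B∖{a} is a bijection from the regular closed sets
of T onto those of T' = T∖{a} with f(∅) = ∅, f(T) = T', f(B∪D) = f(B)∪f(D),
f(closure(T∖B)) = closure_{τ'}(T'∖f(B)), and B∩D ≠ ∅ iff f(B)∩f(D) ≠ ∅, for all
regular closed B, D of T. -/
theorem stmt8 :
    Set.BijOn restrict RCT RCT' ∧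
    restrict ∅ = ∅ ∧
    restrict Set.univ = Set.univ ∧
    (∀ B D : Set Pt, B ∈ RCT → D ∈ RCT →
      restrict (B ∪ D) = restrict B ∪ restrict D) ∧
    (∀ B : Set Pt, B ∈ RCT →
      restrict (closure Bᶜ) = closure (restrict B)ᶜ) ∧
    (∀ B D : Set Pt, B ∈ RCT → D ∈ RCT →
      ((B ∩ D).Nonempty ↔ (restrict B ∩ restrict D).Nonempty)) := by
  refine ⟨⟨?_, ?_, ?_⟩, rfl, rfl, fun _ _ _ _ => rfl, ?_, ?_⟩
  · -- MapsTo
    intro B hB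
    obtain ⟨f, rfl⟩ := exists_bool B
    rw [rc_iff] at hB
    have : restrict {t | f t = true} = {u : Pt' | f u.val = true} := rfl
    rw [this, rc_iff']
    exact L1 f hB
  · -- InjOn
    intro B hB D hD hEq
    obtain ⟨f, rfl⟩ := exists_bool B
    obtain ⟨g, rfl⟩ := exists_bool D
    rw [rc_iff] at hB hD
    ext t
    exact L2 f g hB hD (fun u => Set.ext_iff.mp hEq u) t
  · -- SurjOn
    intro A hA
    obtain ⟨g, rfl⟩ := exists_bool A
    rw [rc_iff'] at hA
    obtain ⟨h1, h2⟩ := L3 g hA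
    refine ⟨{t | liftB g t = true}, (rc_iff _).mpr h1, ?_⟩
    ext u
    show liftB g u.val = true ↔ g u = true
    rw [h2 u]
  · -- closure complement
    intro B hB
    obtain ⟨f, rfl⟩ := exists_bool B
    rw [rc_iff] at hB
    ext t
    rw [show (t ∈ restrict (closure {t | f t = true}ᶜ)) =
        (t.val ∈ closure ({t | f t = true}ᶜ : Set Pt)) from rfl]
    rw [closure_eq, closure_eq']
    constructor
    · rintro ⟨u, hu1, hu2⟩
      have := (L4 f hB t).mp ⟨u, hu1, hu2⟩
      obtain ⟨u', hu1', hu2'⟩ := this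
      exact ⟨u', hu1', hu2'⟩
    · rintro ⟨u, hu1, hu2⟩
      have := (L4 f hB t).mpr ⟨u, hu1, hu2⟩
      obtain ⟨u', hu1', hu2'⟩ := this
      exact ⟨u', hu1', hu2'⟩
  · -- nonempty iff
    intro B D hB hD
    obtain ⟨f, rfl⟩ := exists_bool B
    obtain ⟨g, rfl⟩ := exists_bool D
    rw [rc_iff] at hB hD
    constructor
    · rintro ⟨t, ht1, ht2⟩
      obtain ⟨u, hu1, hu2⟩ := (L5 f g hB hD).mp ⟨t, ht1, ht2⟩
      exact ⟨u, hu1, hu2⟩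
    · rintro ⟨t, ht1, ht2⟩
      obtain ⟨u, hu1, hu2⟩ := (L5 f g hB hD).mpr ⟨t, ht1, ht2⟩
      exact ⟨u, hu1, hu2⟩
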